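/- A function f(z) = z - Σ_{n≥2} a_n z^n with a_n ≥ 0 satisfies Re[ (f'(z) + z f''(z)) / (f'(z) + β z f''(z)) ] > α for all z ∈ U if and only if Σ_{n≥2} n(n-α-(n-1)αβ) a_n ≤ 1-α. -/

import Mathlib

/-!
Write `P(z) = ∑ (n+2) a_{n+2} z^{n+1}` and `Q(z) = ∑ (n+1)(n+2) a_{n+2} z^{n+1}`, so that
`f' = 1 - P`, `z f'' = -Q` and the quotient is `(1 - P - Q) / (1 - P - βQ)`. The series
`E = (1-α) P + (1-αβ) Q` has exactly the coefficients `n(n - α - (n-1)αβ) a_n` of the criterion.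

If their sum is at most `1 - α`, then on `|z| = r` we get `E(r) ≤ r (1 - α) < 1 - α`, which is
`(1-β)|Q(z)| < (1-α)|1 - P(z) - βQ(z)|`; this puts the quotient in the disc of radius `1 - α`
about `1`. Conversely, on `[0, 1)` the quotient is real and equals `α` exactly when
`E(r) = 1 - α`; as `E(0) = 0` and `E` is continuous, `E < 1 - α` there, and letting `r → 1`
bounds every partial sum of the coefficients of `E`.
-/

open Complex Set Filter Topology

theorem exists_natCast_add_mul_pow_le {t s : ℝ} (ht : 0 ≤ t) (hts : t < s) (c : ℝ) :
    ∃ K, ∀ n : ℕ, (n + c) * t ^ n ≤ K * s ^ n := by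
  have hs : 0 < s := ht.trans_lt hts
  have hratio : t / s < 1 := (div_lt_one hs).2 hts
  have hlim : Tendsto (fun n : ℕ => (n + c) * (t / s) ^ n) atTop (𝓝 0) := by
    simpa [add_mul] using (tendsto_self_mul_const_pow_of_lt_one (by positivity) hratio).add
      ((tendsto_pow_atTop_nhds_zero_of_lt_one (by positivity) hratio).const_mul c)
  obtain ⟨K, hK⟩ := hlim.bddAbove_range
  refine ⟨K, fun n => ?_⟩
  have := hK (mem_range_self n)
  rw [div_pow, ← mul_div_assoc, div_le_iff₀ (by positivity)] at this
  exact this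

theorem summable_mul_mul_pow_of_le_add {b w : ℕ → ℝ} (hb0 : ∀ n, 0 ≤ b n)
    (hb : ∀ s ∈ Ioo (0 : ℝ) 1, Summable fun n => b n * s ^ n) {c : ℝ}
    (hw0 : ∀ n, 0 ≤ w n) (hw : ∀ n, w n ≤ n + c) {t : ℝ} (ht : t ∈ Ico (0 : ℝ) 1) :
    Summable fun n => w n * b n * t ^ n := by
  obtain ⟨ht0, ht1⟩ := ht
  obtain ⟨K, hK⟩ := exists_natCast_add_mul_pow_le ht0 (by linarith : t < (1 + t) / 2) c
  refine ((hb ((1 + t) / 2) ⟨by linarith, by linarith⟩).mul_left K).of_nonneg_of_le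
    (fun n => by have := hw0 n; have := hb0 n; positivity) fun n => ?_
  calc w n * b n * t ^ n ≤ (n + c) * t ^ n * b n := by
        rw [mul_right_comm]
        exact mul_le_mul_of_nonneg_right
          (mul_le_mul_of_nonneg_right (hw n) (pow_nonneg ht0 n)) (hb0 n)
    _ ≤ K * ((1 + t) / 2) ^ n * b n := mul_le_mul_of_nonneg_right (hK n) (hb0 n)
    _ = K * (b n * ((1 + t) / 2) ^ n) := by ring

theorem summable_natCast_add_mul_mul_pow {b : ℕ → ℝ} (hb0 : ∀ n, 0 ≤ b n)
    (hb : ∀ s ∈ Ioo (0 : ℝ) 1, Summable fun n => b n * s ^ n) {c : ℝ} (hc : 0 ≤ c) :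
    ∀ s ∈ Ioo (0 : ℝ) 1, Summable fun n => (n + c) * b n * s ^ n := fun s hs =>
  summable_mul_mul_pow_of_le_add hb0 hb (fun n => by positivity) (fun n => le_rfl)
    (Ioo_subset_Ico_self hs)

section PowerSeries

variable {𝕜 : Type*} [RCLike 𝕜] {b : ℕ → ℝ}

theorem hasDerivAt_tsum_mul_pow_add_one (hb0 : ∀ n, 0 ≤ b n)
    (hb : ∀ s ∈ Ioo (0 : ℝ) 1, Summable fun n => b n * s ^ n) (k : ℕ) {z : 𝕜} (hz : ‖z‖ < 1) :
    HasDerivAt (fun w : 𝕜 => ∑' n, (b n : 𝕜) * w ^ (n + k + 1))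
      (∑' n, ((n + k + 1 : ℕ) : 𝕜) * b n * z ^ (n + k)) z := by
  obtain ⟨t, hzt, ht1⟩ := exists_between hz
  have ht0 : 0 < t := (norm_nonneg z).trans_lt hzt
  have hu : Summable fun n => ((n + k + 1 : ℕ) : ℝ) * b n * t ^ (n + k) := by
    refine ((summable_mul_mul_pow_of_le_add hb0 hb (w := fun n => ((n + k + 1 : ℕ) : ℝ))
      (c := k + 1) (fun n => by positivity) (fun n => le_of_eq (by push_cast; ring))
      ⟨ht0.le, ht1⟩).mul_left (t ^ k)).congr fun n => ?_
    ring
  refine hasDerivAt_tsum_of_isPreconnected (g := fun (n : ℕ) (w : 𝕜) => (b n : 𝕜) * w ^ (n + k + 1))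
    (g' := fun (n : ℕ) (w : 𝕜) => ((n + k + 1 : ℕ) : 𝕜) * b n * w ^ (n + k)) hu Metric.isOpen_ball
    (convex_ball 0 t).isPreconnected (fun n y _ => ?_) (fun n y hy => ?_) (Metric.mem_ball_self ht0)
    (by simp) (mem_ball_zero_iff.2 hzt)
  · refine ((hasDerivAt_pow (n + k + 1) y).const_mul (b n : 𝕜)).congr_deriv ?_
    rw [Nat.add_sub_cancel]
    ring
  · rw [mem_ball_zero_iff] at hy
    rw [norm_mul, norm_mul, norm_pow, RCLike.norm_natCast, RCLike.norm_ofReal,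
      abs_of_nonneg (hb0 n)]
    have := hb0 n
    gcongr

noncomputable def shiftedSeries (b : ℕ → ℝ) (z : 𝕜) : 𝕜 :=
  ∑' n, (b n : 𝕜) * z ^ (n + 1)

theorem hasDerivAt_shiftedSeries (hb0 : ∀ n, 0 ≤ b n)
    (hb : ∀ s ∈ Ioo (0 : ℝ) 1, Summable fun n => b n * s ^ n) {z : 𝕜} (hz : ‖z‖ < 1) :
    HasDerivAt (shiftedSeries b) (∑' n, ((n + 1 : ℕ) : 𝕜) * b n * z ^ n) z :=
  hasDerivAt_tsum_mul_pow_add_one hb0 hb 0 hz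

theorem summable_mul_pow_succ (hb0 : ∀ n, 0 ≤ b n)
    (hb : ∀ s ∈ Ioo (0 : ℝ) 1, Summable fun n => b n * s ^ n) {r : ℝ} (hr : r ∈ Ico (0 : ℝ) 1) :
    Summable fun n => b n * r ^ (n + 1) := by
  refine ((summable_mul_mul_pow_of_le_add hb0 hb (w := 1) (c := 1) (fun _ => zero_le_one)
    (fun n => by simp) hr).mul_left r).congr fun n => ?_
  simp only [Pi.one_apply]
  ring

@[simp]
theorem shiftedSeries_zero : shiftedSeries b (0 : 𝕜) = 0 := by
  simp [shiftedSeries]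

@[simp]
theorem shiftedSeries_real (r : ℝ) : shiftedSeries b r = ∑' n, b n * r ^ (n + 1) := rfl

theorem shiftedSeries_ofReal (r : ℝ) : shiftedSeries b (r : ℂ) = ((shiftedSeries b r : ℝ) : ℂ) := by
  rw [shiftedSeries_real, ofReal_tsum]
  push_cast
  rfl

theorem norm_shiftedSeries_le (hb0 : ∀ n, 0 ≤ b n)
    (hb : ∀ s ∈ Ioo (0 : ℝ) 1, Summable fun n => b n * s ^ n) {z : 𝕜} (hz : ‖z‖ < 1) :
    ‖shiftedSeries b z‖ ≤ shiftedSeries b ‖z‖ := by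
  have hnorm : ∀ n, ‖(b n : 𝕜) * z ^ (n + 1)‖ = b n * ‖z‖ ^ (n + 1) := fun n => by
    rw [norm_mul, norm_pow, RCLike.norm_ofReal, abs_of_nonneg (hb0 n)]
  refine tsum_of_norm_bounded ?_ fun n => (hnorm n).le
  exact (summable_mul_pow_succ hb0 hb ⟨norm_nonneg z, hz⟩).hasSum

theorem continuousOn_shiftedSeries (hb0 : ∀ n, 0 ≤ b n)
    (hb : ∀ s ∈ Ioo (0 : ℝ) 1, Summable fun n => b n * s ^ n) :
    ContinuousOn (shiftedSeries b : ℝ → ℝ) (Ico 0 1) := fun r hr =>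
  (hasDerivAt_shiftedSeries hb0 hb (by rw [Real.norm_eq_abs, abs_of_nonneg hr.1]; exact hr.2)
    ).continuousAt.continuousWithinAt

theorem shiftedSeries_le_mul_tsum (hb0 : ∀ n, 0 ≤ b n) (hs : Summable b) {r : ℝ}
    (hr : r ∈ Icc (0 : ℝ) 1) : shiftedSeries b r ≤ r * ∑' n, b n := by
  have hterm : ∀ n, b n * r ^ (n + 1) ≤ r * b n := fun n => by
    rw [pow_succ, ← mul_assoc, mul_comm r]
    exact mul_le_mul_of_nonneg_right (mul_le_of_le_one_right (hb0 n) (pow_le_one₀ hr.1 hr.2))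
      hr.1
  rw [shiftedSeries_real, ← tsum_mul_left]
  exact Summable.tsum_le_tsum hterm
    ((hs.mul_left r).of_nonneg_of_le (fun n => mul_nonneg (hb0 n) (pow_nonneg hr.1 _)) hterm)
    (hs.mul_left r)

theorem tsum_le_of_shiftedSeries_le (hb0 : ∀ n, 0 ≤ b n)
    (hb : ∀ s ∈ Ioo (0 : ℝ) 1, Summable fun n => b n * s ^ n) {C : ℝ}
    (h : ∀ r ∈ Ico (0 : ℝ) 1, shiftedSeries b r ≤ C) : Summable b ∧ ∑' n, b n ≤ C := by
  have hpartial : ∀ M, ∑ n ∈ Finset.range M, b n ≤ C := by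
    intro M
    have hlim : Tendsto (fun r : ℝ => ∑ n ∈ Finset.range M, b n * r ^ (n + 1)) (𝓝[<] 1)
        (𝓝 (∑ n ∈ Finset.range M, b n)) :=
      ((continuous_finsetSum _ fun n _ => continuous_const.mul (continuous_pow _)).tendsto' 1 _
        (by simp)).mono_left nhdsWithin_le_nhds
    refine le_of_tendsto hlim ?_
    filter_upwards [Ico_mem_nhdsLT (zero_lt_one' ℝ)] with r hr
    exact (Summable.sum_le_tsum _ (fun n _ => mul_nonneg (hb0 n) (pow_nonneg hr.1 _))
      (summable_mul_pow_succ hb0 hb hr)).trans (h r hr)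
  exact ⟨summable_of_sum_range_le hb0 hpartial, Real.tsum_le_of_sum_range_le hb0 hpartial⟩

theorem shiftedSeries_mul_add_mul {p q : ℕ → ℝ} {r : ℝ}
    (hp : Summable fun n => p n * r ^ (n + 1)) (hq : Summable fun n => q n * r ^ (n + 1))
    (c d : ℝ) :
    shiftedSeries (fun n => c * p n + d * q n) r =
      c * shiftedSeries p r + d * shiftedSeries q r := by
  simp only [shiftedSeries_real, ← tsum_mul_left, ← (hp.mul_left c).tsum_add (hq.mul_left d)]
  exact tsum_congr fun n => by ring

end PowerSeries

theorem ofReal_mem_ball_zero_one {r : ℝ} (hr : r ∈ Ico (0 : ℝ) 1) :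
    (r : ℂ) ∈ Metric.ball (0 : ℂ) 1 := by
  rw [mem_ball_zero_iff, norm_real, Real.norm_of_nonneg hr.1]
  exact hr.2

theorem lt_re_div_of_norm_sub_lt {u v : ℂ} {α : ℝ} (h : ‖u - v‖ < (1 - α) * ‖v‖) :
    α < (u / v).re := by
  have hv : v ≠ 0 := by
    rintro rfl
    simp only [norm_zero, mul_zero, sub_zero] at h
    exact (norm_nonneg u).not_gt h
  have hdist : ‖u / v - 1‖ < 1 - α := by
    rw [show u / v - 1 = (u - v) / v by field_simp, norm_div,
      div_lt_iff₀ (norm_pos_iff.2 hv)]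
    exact h
  have hre := (abs_le.1 (abs_re_le_norm (u / v - 1))).1
  rw [sub_re, one_re] at hre
  linarith

theorem sub_mul_ne_zero_of_lt_div {x y α : ℝ} (hα : 0 ≤ α) (h : α < x / y) : x - α * y ≠ 0 := by
  intro hxy
  rw [sub_eq_zero.1 hxy] at h
  rcases eq_or_ne y 0 with hy | hy
  · simp [hy] at h
    linarith
  · rw [mul_div_cancel_right₀ _ hy] at h
    exact h.false

section Criterion

variable {α β : ℝ} {p q : ℕ → ℝ}

theorem lt_re_div_of_tsum_le (hα1 : α < 1) (hβ0 : 0 ≤ β) (hβ1 : β ≤ 1)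
    (hp0 : ∀ n, 0 ≤ p n) (hp : ∀ s ∈ Ioo (0 : ℝ) 1, Summable fun n => p n * s ^ n)
    (hq0 : ∀ n, 0 ≤ q n) (hq : ∀ s ∈ Ioo (0 : ℝ) 1, Summable fun n => q n * s ^ n)
    (hs : Summable fun n => (1 - α) * p n + (1 - α * β) * q n)
    (hle : ∑' n, ((1 - α) * p n + (1 - α * β) * q n) ≤ 1 - α) {z : ℂ} (hz : ‖z‖ < 1) :
    α < ((1 - shiftedSeries p z - shiftedSeries q z) /
      (1 - shiftedSeries p z - β * shiftedSeries q z)).re := by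
  set r := ‖z‖
  have hr : r ∈ Ico (0 : ℝ) 1 := ⟨norm_nonneg z, hz⟩
  have hP := norm_shiftedSeries_le hp0 hp hz
  have hQ := norm_shiftedSeries_le hq0 hq hz
  have hE : (1 - α) * shiftedSeries p r + (1 - α * β) * shiftedSeries q r < 1 - α :=
    calc _ = shiftedSeries (fun n => (1 - α) * p n + (1 - α * β) * q n) r :=
          (shiftedSeries_mul_add_mul (summable_mul_pow_succ hp0 hp hr)
            (summable_mul_pow_succ hq0 hq hr) _ _).symm
      _ ≤ r * ∑' n, ((1 - α) * p n + (1 - α * β) * q n) :=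
          shiftedSeries_le_mul_tsum (fun n => add_nonneg (mul_nonneg (by linarith) (hp0 n))
            (mul_nonneg (by nlinarith) (hq0 n))) hs ⟨hr.1, hz.le⟩
      _ ≤ r * (1 - α) := mul_le_mul_of_nonneg_left hle hr.1
      _ < 1 - α := mul_lt_of_lt_one_left (by linarith) hz
  have hv : 1 - shiftedSeries p r - β * shiftedSeries q r
      ≤ ‖1 - shiftedSeries p z - β * shiftedSeries q z‖ := by
    have := norm_sub_norm_le (1 : ℂ) (shiftedSeries p z + β * shiftedSeries q z)
    have := norm_add_le (shiftedSeries p z) (β * shiftedSeries q z)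
    rw [norm_mul, norm_real, Real.norm_of_nonneg hβ0, norm_one] at *
    rw [show (1 : ℂ) - shiftedSeries p z - β * shiftedSeries q z
      = 1 - (shiftedSeries p z + β * shiftedSeries q z) by ring]
    nlinarith
  apply lt_re_div_of_norm_sub_lt
  calc ‖(1 - shiftedSeries p z - shiftedSeries q z) -
        (1 - shiftedSeries p z - β * shiftedSeries q z)‖ = (1 - β) * ‖shiftedSeries q z‖ := by
        rw [show (1 - shiftedSeries p z - shiftedSeries q z) -
          (1 - shiftedSeries p z - β * shiftedSeries q z) = ((β - 1 : ℝ) : ℂ) * shiftedSeries q z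
          by push_cast; ring, norm_mul, norm_real, Real.norm_of_nonpos (by linarith), neg_sub]
    _ ≤ (1 - β) * shiftedSeries q r := mul_le_mul_of_nonneg_left hQ (by linarith)
    _ < (1 - α) * (1 - shiftedSeries p r - β * shiftedSeries q r) := by linear_combination hE
    _ ≤ (1 - α) * ‖1 - shiftedSeries p z - β * shiftedSeries q z‖ :=
        mul_le_mul_of_nonneg_left hv (by linarith)

theorem tsum_le_of_lt_re_div (hα0 : 0 ≤ α) (hα1 : α < 1) (hβ1 : β ≤ 1)
    (hp0 : ∀ n, 0 ≤ p n) (hp : ∀ s ∈ Ioo (0 : ℝ) 1, Summable fun n => p n * s ^ n)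
    (hq0 : ∀ n, 0 ≤ q n) (hq : ∀ s ∈ Ioo (0 : ℝ) 1, Summable fun n => q n * s ^ n)
    (h : ∀ r ∈ Ico (0 : ℝ) 1, α < ((1 - shiftedSeries p (r : ℂ) - shiftedSeries q (r : ℂ)) /
      (1 - shiftedSeries p (r : ℂ) - β * shiftedSeries q (r : ℂ))).re) :
    (Summable fun n => (1 - α) * p n + (1 - α * β) * q n) ∧
      ∑' n, ((1 - α) * p n + (1 - α * β) * q n) ≤ 1 - α := by
  set e := fun n => (1 - α) * p n + (1 - α * β) * q n
  have he0 : ∀ n, 0 ≤ e n := fun n =>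
    add_nonneg (mul_nonneg (by linarith) (hp0 n)) (mul_nonneg (by nlinarith) (hq0 n))
  have he : ∀ s ∈ Ioo (0 : ℝ) 1, Summable fun n => e n * s ^ n := fun s hs =>
    (((hp s hs).mul_left (1 - α)).add ((hq s hs).mul_left (1 - α * β))).congr fun n => by ring
  have hne : ∀ r ∈ Ico (0 : ℝ) 1, shiftedSeries e r ≠ 1 - α := by
    intro r hr
    have hlt : α < (1 - shiftedSeries p r - shiftedSeries q r) /
        (1 - shiftedSeries p r - β * shiftedSeries q r) := by
      simpa only [shiftedSeries_ofReal, ← ofReal_one, ← ofReal_mul, ← ofReal_sub, ← ofReal_div,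
        ofReal_re] using h r hr
    rw [shiftedSeries_mul_add_mul (summable_mul_pow_succ hp0 hp hr)
      (summable_mul_pow_succ hq0 hq hr)]
    intro heq
    exact sub_mul_ne_zero_of_lt_div hα0 hlt (by linear_combination -heq)
  have hlt : ∀ r ∈ Ico (0 : ℝ) 1, shiftedSeries e r < 1 - α := by
    intro r hr
    by_contra! hge
    obtain ⟨x, hx, hex⟩ := isPreconnected_Ico.intermediate_value (left_mem_Ico.2 one_pos) hr
      (continuousOn_shiftedSeries he0 he) ⟨by simp only [shiftedSeries_zero]; linarith, hge⟩
    exact hne x hx hex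
  exact tsum_le_of_shiftedSeries_le he0 he fun r hr => (hlt r hr).le

theorem forall_lt_re_div_iff (hα0 : 0 ≤ α) (hα1 : α < 1) (hβ0 : 0 ≤ β) (hβ1 : β ≤ 1)
    (hp0 : ∀ n, 0 ≤ p n) (hp : ∀ s ∈ Ioo (0 : ℝ) 1, Summable fun n => p n * s ^ n)
    (hq0 : ∀ n, 0 ≤ q n) (hq : ∀ s ∈ Ioo (0 : ℝ) 1, Summable fun n => q n * s ^ n) :
    (∀ z ∈ Metric.ball (0 : ℂ) 1, α < ((1 - shiftedSeries p z - shiftedSeries q z) /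
      (1 - shiftedSeries p z - β * shiftedSeries q z)).re) ↔
    (Summable fun n => (1 - α) * p n + (1 - α * β) * q n) ∧
      ∑' n, ((1 - α) * p n + (1 - α * β) * q n) ≤ 1 - α :=
  ⟨fun h => tsum_le_of_lt_re_div hα0 hα1 hβ1 hp0 hp hq0 hq fun r hr =>
      h r (ofReal_mem_ball_zero_one hr),
    fun ⟨hs, hle⟩ _ hz =>
      lt_re_div_of_tsum_le hα1 hβ0 hβ1 hp0 hp hq0 hq hs hle (mem_ball_zero_iff.1 hz)⟩

end Criterion

section TaylorCoefficients

variable {f : ℂ → ℂ} {b : ℕ → ℝ}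

theorem summable_mul_pow_of_summable_mul_pow_add_two
    (h : ∀ z ∈ Metric.ball (0 : ℂ) 1, Summable fun n => (b n : ℂ) * z ^ (n + 2)) :
    ∀ s ∈ Ioo (0 : ℝ) 1, Summable fun n => b n * s ^ n := by
  intro s hs
  have hsum : Summable fun n => b n * s ^ (n + 2) := by
    exact_mod_cast h s (ofReal_mem_ball_zero_one (Ioo_subset_Ico_self hs))
  refine (hsum.div_const (s ^ 2)).congr fun n => ?_
  rw [pow_add, ← mul_assoc, mul_div_cancel_right₀ _ (pow_ne_zero 2 hs.1.ne')]

theorem hasDerivAt_of_hasSum_sub (hb0 : ∀ n, 0 ≤ b n)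
    (hb : ∀ s ∈ Ioo (0 : ℝ) 1, Summable fun n => b n * s ^ n)
    (hf : ∀ z ∈ Metric.ball (0 : ℂ) 1, HasSum (fun n => (b n : ℂ) * z ^ (n + 2)) (z - f z))
    {z : ℂ} (hz : z ∈ Metric.ball (0 : ℂ) 1) :
    HasDerivAt f (1 - shiftedSeries (fun n => (n + 2) * b n) z) z := by
  have heq : f =ᶠ[𝓝 z] fun w => w - ∑' n, (b n : ℂ) * w ^ (n + 1 + 1) :=
    eventually_of_mem (Metric.isOpen_ball.mem_nhds hz) fun w hw => by
      show f w = w - ∑' n, (b n : ℂ) * w ^ (n + 2)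
      rw [(hf w hw).tsum_eq]
      ring
  refine (((hasDerivAt_id z).sub (hasDerivAt_tsum_mul_pow_add_one hb0 hb 1
    (mem_ball_zero_iff.1 hz))).congr_of_eventuallyEq heq).congr_deriv ?_
  simp only [shiftedSeries]
  congr 1
  refine tsum_congr fun n => ?_
  push_cast
  ring

theorem mul_deriv_deriv_of_hasSum_sub (hb0 : ∀ n, 0 ≤ b n)
    (hb : ∀ s ∈ Ioo (0 : ℝ) 1, Summable fun n => b n * s ^ n)
    (hf : ∀ z ∈ Metric.ball (0 : ℂ) 1, HasSum (fun n => (b n : ℂ) * z ^ (n + 2)) (z - f z))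
    {z : ℂ} (hz : z ∈ Metric.ball (0 : ℂ) 1) :
    z * deriv (deriv f) z = -shiftedSeries (fun n => (n + 1) * ((n + 2) * b n)) z := by
  have hderiv : deriv f =ᶠ[𝓝 z] fun w => 1 - shiftedSeries (fun n => (n + 2) * b n) w :=
    eventually_of_mem (Metric.isOpen_ball.mem_nhds hz) fun w hw =>
      (hasDerivAt_of_hasSum_sub hb0 hb hf hw).deriv
  rw [hderiv.deriv_eq, deriv_const_sub,
    (hasDerivAt_shiftedSeries (fun n => mul_nonneg (by positivity) (hb0 n))
      (summable_natCast_add_mul_mul_pow hb0 hb zero_le_two) (mem_ball_zero_iff.1 hz)).deriv,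
    shiftedSeries, mul_neg, ← tsum_mul_left]
  congr 1
  refine tsum_congr fun n => ?_
  push_cast
  ring

end TaylorCoefficients

theorem stmt8 (α β : ℝ) (hα0 : 0 ≤ α) (hα1 : α < 1) (hβ0 : 0 ≤ β) (hβ1 : β < 1)
    (f : ℂ → ℂ) (a : ℕ → ℝ) (ha : ∀ n, 0 ≤ a n)
    (hf : ∀ z ∈ Metric.ball (0 : ℂ) 1,
      HasSum (fun n : ℕ => ((a (n + 2) : ℝ) : ℂ) * z ^ (n + 2)) (z - f z)) :
    (∀ z ∈ Metric.ball (0 : ℂ) 1,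
      α < (((deriv f z + z * deriv (deriv f) z) /
        (deriv f z + (β : ℂ) * z * deriv (deriv f) z)).re)) ↔
    (Summable (fun n : ℕ =>
      ((n : ℝ) + 2) * (((n : ℝ) + 2) - α - ((n : ℝ) + 1) * α * β) * a (n + 2)) ∧
    ∑' n : ℕ,
      ((n : ℝ) + 2) * (((n : ℝ) + 2) - α - ((n : ℝ) + 1) * α * β) * a (n + 2) ≤ 1 - α) := by
  set p : ℕ → ℝ := fun n => (n + 2) * a (n + 2)
  set q : ℕ → ℝ := fun n => (n + 1) * p n
  have hb0 : ∀ n, 0 ≤ a (n + 2) := fun n => ha _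
  have hb := summable_mul_pow_of_summable_mul_pow_add_two fun z hz => (hf z hz).summable
  have hp0 : ∀ n, 0 ≤ p n := fun n => mul_nonneg (by positivity) (hb0 n)
  have hp := summable_natCast_add_mul_mul_pow hb0 hb zero_le_two
  have hq0 : ∀ n, 0 ≤ q n := fun n => mul_nonneg (by positivity) (hp0 n)
  have hq := summable_natCast_add_mul_mul_pow hp0 hp zero_le_one
  have hquot : ∀ z ∈ Metric.ball (0 : ℂ) 1,
      (deriv f z + z * deriv (deriv f) z) / (deriv f z + (β : ℂ) * z * deriv (deriv f) z) =
        (1 - shiftedSeries p z - shiftedSeries q z) /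
          (1 - shiftedSeries p z - β * shiftedSeries q z) := by
    intro z hz
    rw [mul_assoc, mul_deriv_deriv_of_hasSum_sub hb0 hb hf hz,
      (hasDerivAt_of_hasSum_sub hb0 hb hf hz).deriv]
    ring
  have hcoeff : (fun n : ℕ => ((n : ℝ) + 2) * (((n : ℝ) + 2) - α - ((n : ℝ) + 1) * α * β) *
      a (n + 2)) = fun n => (1 - α) * p n + (1 - α * β) * q n := by
    ext n
    ring
  rw [hcoeff, ← forall_lt_re_div_iff hα0 hα1 hβ0 hβ1.le hp0 hp hq0 hq]
  exact forall₂_congr fun z hz => by rw [hquot z hz]
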